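/- Let G be a symmetric positive definite N_h × N_h real matrix, defining the inner product ⟨u,v⟩_G = uᵀGv and norm ‖u‖_G. Let A be an N_h × N_A matrix that is G-orthonormal (AᵀGA = I), and let Ṽ be an N_A × N' matrix such that V = AṼ is also G-orthonormal. Then for every u ∈ ℝ^{N_h}, ‖u − V Vᵀ G u‖_G² = ‖u − A Aᵀ G u‖_G² + ‖u_pre − Ṽ Ṽᵀ u_pre‖₂², where u_pre = Aᵀ G u and ‖·‖₂ is the Euclidean norm. -/

import Mathlib

open Matrix

/-- The norm induced by a symmetric positive definite matrix `G`. -/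
noncomputable def gNorm {n : ℕ} (G : Matrix (Fin n) (Fin n) ℝ) (u : Fin n → ℝ) : ℝ :=
  Real.sqrt (u ⬝ᵥ G.mulVec u)

/-- The Euclidean norm of a vector. -/
noncomputable def eNorm {n : ℕ} (u : Fin n → ℝ) : ℝ :=
  Real.sqrt (u ⬝ᵥ u)

lemma dp_self_nonneg {k : ℕ} (v : Fin k → ℝ) : 0 ≤ v ⬝ᵥ v :=
  Finset.sum_nonneg fun _ _ => mul_self_nonneg _

lemma gq_nonneg {n : ℕ} {G : Matrix (Fin n) (Fin n) ℝ} (hG : G.PosDef) (v : Fin n → ℝ) :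
    0 ≤ v ⬝ᵥ G.mulVec v := by
  have := hG.posSemidef.dotProduct_mulVec_nonneg v
  rwa [star_trivial] at this

lemma qf_eq {m k : ℕ} (N : Matrix (Fin m) (Fin k) ℝ) (S : Matrix (Fin m) (Fin m) ℝ)
    (v : Fin k → ℝ) :
    (N.mulVec v) ⬝ᵥ S.mulVec (N.mulVec v) = v ⬝ᵥ (Nᵀ * S * N).mulVec v := by
  simp [← mulVec_mulVec, dotProduct_mulVec, vecMul_transpose]

lemma dot_eq {m k : ℕ} (N : Matrix (Fin m) (Fin k) ℝ) (v : Fin k → ℝ) :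
    (N.mulVec v) ⬝ᵥ (N.mulVec v) = v ⬝ᵥ (Nᵀ * N).mulVec v := by
  simp [← mulVec_mulVec, dotProduct_mulVec, vecMul_transpose]

lemma proj_identity {n k : ℕ} (G : Matrix (Fin n) (Fin n) ℝ) (hGt : Gᵀ = G)
    (B : Matrix (Fin n) (Fin k) ℝ) (hB : Bᵀ * G * B = 1) :
    (1 - B * Bᵀ * G)ᵀ * G * (1 - B * Bᵀ * G) = G - G * (B * Bᵀ) * G := by
  have hB' : ∀ (X : Matrix (Fin k) (Fin n) ℝ), Bᵀ * (G * (B * X)) = X := by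
    intro X
    rw [← Matrix.mul_assoc, ← Matrix.mul_assoc, hB, Matrix.one_mul]
  simp only [transpose_sub, transpose_mul, transpose_one, transpose_transpose, hGt]
  simp only [Matrix.sub_mul, Matrix.mul_sub, Matrix.one_mul, Matrix.mul_one, Matrix.mul_assoc,
    hB']
  abel

/-- Pythagoras-type decomposition of the `G`-orthogonal projection error through a
`G`-orthonormal pre-reduction matrix `A`. -/
theorem stmt_0 {Nh NA N' : ℕ}
    (G : Matrix (Fin Nh) (Fin Nh) ℝ) (hG : G.PosDef)
    (A : Matrix (Fin Nh) (Fin NA) ℝ) (hA : Aᵀ * G * A = 1)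
    (Vt : Matrix (Fin NA) (Fin N') ℝ)
    (hV : (A * Vt)ᵀ * G * (A * Vt) = 1)
    (u : Fin Nh → ℝ) :
    gNorm G (u - ((A * Vt) * (A * Vt)ᵀ * G).mulVec u) ^ 2
      = gNorm G (u - (A * Aᵀ * G).mulVec u) ^ 2
        + eNorm ((Aᵀ * G).mulVec u - (Vt * Vtᵀ).mulVec ((Aᵀ * G).mulVec u)) ^ 2 := by
  have hGt : Gᵀ = G := by
    have := hG.isHermitian
    simpa [Matrix.IsHermitian, conjTranspose_eq_transpose_of_trivial] using this
  have hVt : Vtᵀ * Vt = 1 := by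
    have h1 : Vtᵀ * (Aᵀ * G * A) * Vt = 1 := by
      rw [← hV]; simp only [transpose_mul, Matrix.mul_assoc]
    rwa [hA, Matrix.mul_one] at h1
  -- rewrite residuals as matrix-vector products
  have r1 : u - ((A * Vt) * (A * Vt)ᵀ * G).mulVec u
      = ((1 : Matrix (Fin Nh) (Fin Nh) ℝ) - (A * Vt) * (A * Vt)ᵀ * G).mulVec u := by
    rw [Matrix.sub_mulVec, Matrix.one_mulVec]
  have r2 : u - (A * Aᵀ * G).mulVec u
      = ((1 : Matrix (Fin Nh) (Fin Nh) ℝ) - A * Aᵀ * G).mulVec u := by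
    rw [Matrix.sub_mulVec, Matrix.one_mulVec]
  have r3 : (Aᵀ * G).mulVec u - (Vt * Vtᵀ).mulVec ((Aᵀ * G).mulVec u)
      = (((1 : Matrix (Fin NA) (Fin NA) ℝ) - Vt * Vtᵀ) * (Aᵀ * G)).mulVec u := by
    conv_rhs => rw [← mulVec_mulVec, Matrix.sub_mulVec, Matrix.one_mulVec]
  -- squares of norms are quadratic forms
  have sq1 : gNorm G (u - ((A * Vt) * (A * Vt)ᵀ * G).mulVec u) ^ 2
      = u ⬝ᵥ (((1 : Matrix (Fin Nh) (Fin Nh) ℝ) - (A * Vt) * (A * Vt)ᵀ * G)ᵀ * G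
          * ((1 : Matrix (Fin Nh) (Fin Nh) ℝ) - (A * Vt) * (A * Vt)ᵀ * G)).mulVec u := by
    rw [gNorm, Real.sq_sqrt (gq_nonneg hG _), r1, qf_eq]
  have sq2 : gNorm G (u - (A * Aᵀ * G).mulVec u) ^ 2
      = u ⬝ᵥ (((1 : Matrix (Fin Nh) (Fin Nh) ℝ) - A * Aᵀ * G)ᵀ * G
          * ((1 : Matrix (Fin Nh) (Fin Nh) ℝ) - A * Aᵀ * G)).mulVec u := by
    rw [gNorm, Real.sq_sqrt (gq_nonneg hG _), r2, qf_eq]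
  have sq3 : eNorm ((Aᵀ * G).mulVec u - (Vt * Vtᵀ).mulVec ((Aᵀ * G).mulVec u)) ^ 2
      = u ⬝ᵥ ((((1 : Matrix (Fin NA) (Fin NA) ℝ) - Vt * Vtᵀ) * (Aᵀ * G))ᵀ
          * (((1 : Matrix (Fin NA) (Fin NA) ℝ) - Vt * Vtᵀ) * (Aᵀ * G))).mulVec u := by
    rw [eNorm, Real.sq_sqrt (dp_self_nonneg _), r3, dot_eq]
  rw [sq1, sq2, sq3]
  -- matrix identity
  have e1 := proj_identity G hGt (A * Vt) hV
  have e2 := proj_identity G hGt A hA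
  have e3 : (((1 : Matrix (Fin NA) (Fin NA) ℝ) - Vt * Vtᵀ) * (Aᵀ * G))ᵀ
      * (((1 : Matrix (Fin NA) (Fin NA) ℝ) - Vt * Vtᵀ) * (Aᵀ * G))
      = G * (A * Aᵀ) * G - G * ((A * Vt) * (A * Vt)ᵀ) * G := by
    have hVt' : ∀ (X : Matrix (Fin N') (Fin Nh) ℝ), Vtᵀ * (Vt * X) = X := by
      intro X
      rw [← Matrix.mul_assoc, hVt, Matrix.one_mul]
    simp only [transpose_sub, transpose_mul, transpose_one, transpose_transpose, hGt]
    simp only [Matrix.sub_mul, Matrix.mul_sub, Matrix.one_mul, Matrix.mul_one, Matrix.mul_assoc,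
      hVt']
    abel
  rw [e1, e2, e3]
  have : G - G * ((A * Vt) * (A * Vt)ᵀ) * G
      = (G - G * (A * Aᵀ) * G) + (G * (A * Aᵀ) * G - G * ((A * Vt) * (A * Vt)ᵀ) * G) := by
    abel
  rw [this, Matrix.add_mulVec, dotProduct_add]
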